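/- Let f satisfy Assumption A and ρ > 0. Let X ⊂ ℝ^d be a nonempty compact set, (S, Σ, P₀) a probability space, and ℓ : X × S → ℝ jointly measurable with x ↦ ℓ(x; s) continuous for every s ∈ S. Assume there is a measurable envelope Z̄ : S → ℝ₊ with |ℓ(x; s)| ≤ Z̄(s) for all x, s and E_{P₀}[Z̄^{1+ε}] < ∞ for some ε > 0, and let Z₁, Z₂, … be i.i.d. with law P₀. Write F̂_n(x) := sup_{p ∈ Δ_{n,ρ}} Σ_{i=1}^n p_i ℓ(x; Z_i) and F(x) := E_{P₀}[ℓ(x; Z)]. Then min_{x∈X} F̂_n(x) − min_{x∈X} F(x) → 0 in probability, and sup_{x ∈ S_n*} dist(x, S*) → 0 in probability, where S_n* := argmin_{x∈X} F̂_n(x) and S* := argmin_{x∈X} F(x) (both nonempty by compactness and continuity). -/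

import Mathlib

/-!
Near `t = 1` the divergence satisfies `f t ≥ (t - 1)² / 2`, so by convexity
`f t ≥ (η / 2) (|t - 1| - η)₊` for all small `η > 0`. Hence every `p ∈ Δ_{n,ρ}` has
`∑ (|n pᵢ - 1| - η)₊ ≤ 2ρ / η`, and `F̂ₙ(x)` differs from the sample mean of the `ℓ(x; Zᵢ)` by at
most `η · mean Z̄(Zᵢ) + (2ρ / η) · maxᵢ Z̄(Zᵢ) / n`. The first term is small for small `η` by the
strong law, the second with high probability because `n P₀(Z̄ ≥ κ n) → 0` for integrable `Z̄`.
The sample means converge to `F` uniformly on `X` almost surely: cover `X` by finitely many balls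
on which `ℓ` oscillates little in mean and apply the strong law to the centres and to the
oscillations. So `F̂ₙ → F` uniformly on `X` in probability, and both the minimum value and the
set of minimizers of a continuous function on a compact set are stable under uniformly small
perturbations.
-/

open MeasureTheory ProbabilityTheory Filter Set

noncomputable section

/-- Assumption A: `f : ℝ → ℝ ∪ {+∞}` is lower semicontinuous, convex, equal to `+∞` on
negative reals, three times continuously differentiable on a neighborhood of `1`, with
`f 1 = f' 1 = 0` and `f'' 1 = 2`. -/
structure IsDivergenceFn (f : ℝ → EReal) : Prop where
  lsc : LowerSemicontinuous f
  convex : ∀ x y a b : ℝ, 0 ≤ a → 0 ≤ b → a + b = 1 →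
    f (a * x + b * y) ≤ (a : EReal) * f x + (b : EReal) * f y
  eq_top_of_neg : ∀ t : ℝ, t < 0 → f t = ⊤
  smooth : ∃ g : ℝ → ℝ, ∃ ε : ℝ, 0 < ε ∧
    (∀ t ∈ Set.Ioo (1 - ε) (1 + ε), f t = (g t : EReal)) ∧
    ContDiffOn ℝ 3 g (Set.Ioo (1 - ε) (1 + ε)) ∧
    g 1 = 0 ∧ deriv g 1 = 0 ∧ deriv (deriv g) 1 = 2

/-- The empirical `f`-divergence ball `Δ_{n,ρ}`. -/
def simplexBall (f : ℝ → EReal) (n : ℕ) (ρ : ℝ) : Set (Fin n → ℝ) :=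
  {p | (∀ i, 0 ≤ p i) ∧ ∑ i, p i = 1 ∧ ∑ i, f ((n : ℝ) * p i) ≤ (ρ : EReal)}

/-- Sample mean `z̄ = (1/n) ∑ z_i`. -/
def sampleMean {n : ℕ} (z : Fin n → ℝ) : ℝ := (∑ i, z i) / n

/-- Sample variance `s_n(z)² = (1/n) ∑ (z_i − z̄)²`. -/
def sampleVar {n : ℕ} (z : Fin n → ℝ) : ℝ := (∑ i, (z i - sampleMean z) ^ 2) / n

/-- The Huber function `h_ε`. -/
def huber (ε t : ℝ) : ℝ := if |t| ≤ ε then t ^ 2 / 2 else ε * |t| - ε ^ 2 / 2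

open scoped ENNReal

namespace IsDivergenceFn

variable {f : ℝ → EReal}

lemma apply_one (hf : IsDivergenceFn f) : f 1 = 0 := by
  obtain ⟨g, ε, hε, hfg, -, hg1, -⟩ := hf.smooth
  rw [hfg 1 ⟨by linarith, by linarith⟩, hg1, EReal.coe_zero]

lemma exists_sq_le (hf : IsDivergenceFn f) :
    ∃ η₀ > 0, ∀ t, |t - 1| ≤ η₀ → (((t - 1) ^ 2 / 2 : ℝ) : EReal) ≤ f t := by
  obtain ⟨g, ε, hε, hfg, hg, hg1, hg1', hg1''⟩ := hf.smooth
  have hU : Ioo (1 - ε) (1 + ε) ∈ nhds (1 : ℝ) := Ioo_mem_nhds (by linarith) (by linarith)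
  have hgd : DifferentiableAt ℝ g 1 :=
    (hg.differentiableOn (by norm_num)).differentiableAt hU
  have hg'd : DifferentiableAt ℝ (deriv g) 1 :=
    (((hg.deriv_of_isOpen isOpen_Ioo (m := 2) (by norm_num)).differentiableOn
      (by norm_num)).differentiableAt hU)
  -- second-derivative test for `g t - (t - 1) ^ 2 / 2`, whose second derivative at `1` is `1`
  have hderiv : deriv (fun t => g t - (t - 1) ^ 2 / 2) =ᶠ[nhds 1] fun t => deriv g t - (t - 1) := by
    filter_upwards [hU] with t ht
    have hgt := ((hg.differentiableOn (by norm_num)).differentiableAt (isOpen_Ioo.mem_nhds ht))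
    have : HasDerivAt (fun u : ℝ => (u - 1) ^ 2 / 2) (t - 1) t := by
      simpa using (((hasDerivAt_id t).sub_const 1).pow 2).div_const 2
    exact (hgt.hasDerivAt.sub this).deriv
  have hmin : IsLocalMin (fun t => g t - (t - 1) ^ 2 / 2) 1 := by
    refine isLocalMin_of_deriv_deriv_pos ?_ ?_ (hgd.continuousAt.sub (by fun_prop))
    · have h2 : HasDerivAt (fun t => deriv g t - (t - 1)) (deriv (deriv g) 1 - 1) 1 :=
        hg'd.hasDerivAt.sub ((hasDerivAt_id 1).sub_const 1)
      rw [hderiv.deriv_eq, h2.deriv, hg1'']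
      norm_num
    · rw [hderiv.self_of_nhds]
      simp [hg1']
  obtain ⟨η₀, hη₀, hball⟩ := Metric.nhds_basis_closedBall.eventually_iff.1 (hmin.and hU)
  refine ⟨η₀, hη₀, fun t ht => ?_⟩
  obtain ⟨hgt, htU⟩ := hball (by rwa [Metric.mem_closedBall, Real.dist_eq])
  rw [hfg t htU, EReal.coe_le_coe_iff]
  simpa [hg1] using hgt

lemma apply_chord_le (hf : IsDivergenceFn f) {θ : ℝ} (hθ₀ : 0 ≤ θ) (hθ₁ : θ ≤ 1) (t : ℝ) :
    f (1 + θ * (t - 1)) ≤ θ * f t := by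
  have := hf.convex 1 t (1 - θ) θ (by linarith) hθ₀ (by ring)
  rwa [hf.apply_one, mul_zero, zero_add, show (1 - θ) * 1 + θ * t = 1 + θ * (t - 1) by ring] at this

lemma exists_hinge_le (hf : IsDivergenceFn f) :
    ∃ η₀ > 0, ∀ η, 0 < η → η ≤ η₀ → ∀ t,
      ((η / 2 * max (|t - 1| - η) 0 : ℝ) : EReal) ≤ f t := by
  obtain ⟨η₀, hη₀, hsq⟩ := hf.exists_sq_le
  refine ⟨η₀, hη₀, fun η hη hηle t => ?_⟩
  rcases le_or_gt |t - 1| η with hnear | hfar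
  · rw [max_eq_right (by linarith), mul_zero]
    exact (EReal.coe_le_coe_iff.2 (by positivity)).trans (hsq t (hnear.trans hηle))
  -- convexity along the chord from `1` to `t` through the point at distance `η` from `1`
  set θ := η / |t - 1|
  have hd : 0 < |t - 1| := hη.trans hfar
  have hθ : 0 < θ := div_pos hη hd
  have hdist : |1 + θ * (t - 1) - 1| = η := by
    rw [add_sub_cancel_left, abs_mul, abs_of_pos hθ, div_mul_cancel₀ _ hd.ne']
  have hchord := (hsq _ (hdist.trans_le hηle)).trans
    (hf.apply_chord_le hθ.le ((div_le_one hd).2 hfar.le) t)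
  rw [← sq_abs, hdist, ← EReal.div_le_iff_le_mul (by exact_mod_cast hθ) (EReal.coe_ne_top _),
    ← EReal.coe_div] at hchord
  refine (EReal.coe_le_coe_iff.2 ?_).trans hchord
  rw [max_eq_left (by linarith), div_div_eq_mul_div]
  field_simp
  nlinarith

end IsDivergenceFn

lemma EReal.coe_finset_sum {ι : Type*} (s : Finset ι) (g : ι → ℝ) :
    ((∑ i ∈ s, g i : ℝ) : EReal) = ∑ i ∈ s, (g i : EReal) :=
  map_sum (⟨⟨Real.toEReal, EReal.coe_zero⟩, EReal.coe_add⟩ : ℝ →+ EReal) g s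

section SimplexBall

variable {f : ℝ → EReal} {n : ℕ} {ρ : ℝ}

lemma uniform_mem_simplexBall (hf1 : f 1 = 0) (hρ : 0 ≤ ρ) (hn : n ≠ 0) :
    (fun _ => (n : ℝ)⁻¹) ∈ simplexBall f n ρ := by
  have hn' : (n : ℝ) ≠ 0 := Nat.cast_ne_zero.2 hn
  refine ⟨fun _ => by positivity, by simp [hn'], ?_⟩
  simp only [mul_inv_cancel₀ hn', hf1, Finset.sum_const_zero]
  exact_mod_cast hρ

lemma sum_hinge_le_of_mem_simplexBall {η : ℝ} (hη : 0 < η)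
    (hhinge : ∀ t, ((η / 2 * max (|t - 1| - η) 0 : ℝ) : EReal) ≤ f t)
    {p : Fin n → ℝ} (hp : p ∈ simplexBall f n ρ) :
    ∑ i, max (|n * p i - 1| - η) 0 ≤ 2 * ρ / η := by
  have hsum : ((∑ i, η / 2 * max (|n * p i - 1| - η) 0 : ℝ) : EReal) ≤ ρ := by
    rw [EReal.coe_finset_sum]
    exact (Finset.sum_le_sum fun i _ => hhinge _).trans hp.2.2
  rw [EReal.coe_le_coe_iff, ← Finset.mul_sum] at hsum
  rw [le_div_iff₀ hη]
  linarith

lemma abs_sum_mul_sub_sampleMean_le {η B W : ℝ} {p z w : Fin n → ℝ}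
    (hm : ∑ i, max (|n * p i - 1| - η) 0 ≤ B) (hzw : ∀ i, |z i| ≤ w i) (hW : ∀ i, w i ≤ W)
    (hη : 0 ≤ η) (hW0 : 0 ≤ W) :
    |∑ i, p i * z i - sampleMean z| ≤ η * sampleMean w + B * W / n := by
  rcases Nat.eq_zero_or_pos n with rfl | hn
  · simp [sampleMean]
  have hn' : (0 : ℝ) < n := by exact_mod_cast hn
  have hterm : ∀ i, |(p i - (n : ℝ)⁻¹) * z i|
      ≤ (η * w i + max (|n * p i - 1| - η) 0 * W) / n := by
    intro i
    have hdev : |p i - (n : ℝ)⁻¹| = |n * p i - 1| / n := by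
      rw [eq_div_iff hn'.ne', ← abs_of_pos hn', ← abs_mul, abs_of_pos hn']
      congr 1
      field_simp
    rw [abs_mul, hdev, div_mul_eq_mul_div, div_le_div_iff_of_pos_right hn']
    calc |n * p i - 1| * |z i| ≤ (η + max (|n * p i - 1| - η) 0) * w i :=
          mul_le_mul (by linarith [le_max_left (|n * p i - 1| - η) 0]) (hzw i) (abs_nonneg _)
            (by positivity)
      _ ≤ η * w i + max (|n * p i - 1| - η) 0 * W := by
          nlinarith [le_max_right (|n * p i - 1| - η) 0, hW i]
  have hsplit : ∑ i, p i * z i - sampleMean z = ∑ i, (p i - (n : ℝ)⁻¹) * z i := by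
    simp only [sampleMean, sub_mul, Finset.sum_sub_distrib, ← Finset.mul_sum]
    ring
  rw [hsplit]
  calc |∑ i, (p i - (n : ℝ)⁻¹) * z i| ≤ ∑ i, (η * w i + max (|n * p i - 1| - η) 0 * W) / n :=
        (Finset.abs_sum_le_sum_abs _ _).trans (Finset.sum_le_sum fun i _ => hterm i)
    _ = (η * ∑ i, w i + (∑ i, max (|n * p i - 1| - η) 0) * W) / n := by
        rw [← Finset.sum_div, Finset.sum_add_distrib, Finset.mul_sum, Finset.sum_mul]
    _ ≤ (η * ∑ i, w i + B * W) / n := by gcongr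
    _ = η * sampleMean w + B * W / n := by rw [sampleMean]; ring

end SimplexBall

/-- The paper's `F̂ₙ(x)`, at the sample `zᵢ = ℓ(x; Zᵢ)`. -/
def robustAverage (f : ℝ → EReal) (ρ : ℝ) {n : ℕ} (z : Fin n → ℝ) : ℝ :=
  sSup ((fun p : Fin n → ℝ => ∑ i, p i * z i) '' simplexBall f n ρ)

lemma abs_robustAverage_sub_sampleMean_le {f : ℝ → EReal} {ρ η W : ℝ} {n : ℕ}
    (hf1 : f 1 = 0) (hρ : 0 ≤ ρ) (hn : n ≠ 0) (hη : 0 < η)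
    (hhinge : ∀ t, ((η / 2 * max (|t - 1| - η) 0 : ℝ) : EReal) ≤ f t)
    {z w : Fin n → ℝ} (hzw : ∀ i, |z i| ≤ w i) (hW : ∀ i, w i ≤ W) (hW0 : 0 ≤ W) :
    |robustAverage f ρ z - sampleMean z| ≤ η * sampleMean w + 2 * ρ / η * W / n := by
  set B := η * sampleMean w + 2 * ρ / η * W / n
  have hclose : ∀ p ∈ simplexBall f n ρ, |∑ i, p i * z i - sampleMean z| ≤ B := fun p hp =>
    abs_sum_mul_sub_sampleMean_le (sum_hinge_le_of_mem_simplexBall hη hhinge hp) hzw hW hη.le hW0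
  have hmean : sampleMean z ∈ (fun p : Fin n → ℝ => ∑ i, p i * z i) '' simplexBall f n ρ :=
    ⟨_, uniform_mem_simplexBall hf1 hρ hn, by simp [sampleMean, ← Finset.mul_sum, div_eq_inv_mul]⟩
  have hub : ∀ v ∈ (fun p : Fin n → ℝ => ∑ i, p i * z i) '' simplexBall f n ρ,
      v ≤ sampleMean z + B := by
    rintro _ ⟨p, hp, rfl⟩
    linarith [(abs_le.1 (hclose p hp)).2]
  have hB : 0 ≤ B := (abs_nonneg _).trans (hclose _ (uniform_mem_simplexBall hf1 hρ hn))
  rw [robustAverage, abs_le]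
  constructor
  · linarith [le_csSup ⟨_, hub⟩ hmean]
  · linarith [csSup_le ⟨_, hmean⟩ hub]

section Argmin

variable {E : Type*} {X : Set E} {F G : E → ℝ} {c : ℝ}

lemma abs_sInf_image_sub_le {y₀ : E} (hy₀ : y₀ ∈ X) (hmin : IsMinOn F X y₀)
    (h : ∀ x ∈ X, |G x - F x| ≤ c) : |sInf (G '' X) - sInf (F '' X)| ≤ c := by
  rw [isMinOn_iff] at hmin
  have hF : sInf (F '' X) = F y₀ :=
    IsLeast.csInf_eq ⟨mem_image_of_mem F hy₀, forall_mem_image.2 hmin⟩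
  have hlow : ∀ y ∈ X, F y₀ - c ≤ G y := fun y hy => by
    linarith [(abs_le.1 (h y hy)).1, hmin y hy]
  have h₁ : F y₀ - c ≤ sInf (G '' X) :=
    le_csInf ⟨_, mem_image_of_mem G hy₀⟩ (forall_mem_image.2 hlow)
  have h₂ : sInf (G '' X) ≤ F y₀ + c :=
    (csInf_le ⟨_, forall_mem_image.2 hlow⟩ (mem_image_of_mem G hy₀)).trans
      (by linarith [(abs_le.1 (h y₀ hy₀)).2])
  rw [hF, abs_le]
  constructor <;> linarith

lemma exists_sSup_infDist_argmin_lt [PseudoMetricSpace E] (hXc : IsCompact X)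
    (hXne : X.Nonempty) (hF : ContinuousOn F X) {δ : ℝ} (hδ : 0 < δ) :
    ∃ c > 0, ∀ G : E → ℝ, (∀ x ∈ X, |G x - F x| ≤ c) →
      sSup ((fun x => Metric.infDist x {y ∈ X | ∀ y' ∈ X, F y ≤ F y'}) ''
        {x ∈ X | ∀ x' ∈ X, G x ≤ G x'}) < δ := by
  set S := {y ∈ X | ∀ y' ∈ X, F y ≤ F y'}
  suffices ∃ c > 0, ∀ G : E → ℝ, (∀ x ∈ X, |G x - F x| ≤ c) →
      ∀ x ∈ X, (∀ x' ∈ X, G x ≤ G x') → Metric.infDist x S < δ / 2 by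
    obtain ⟨c, hc, hG⟩ := this
    refine ⟨c, hc, fun G hGF => (Real.sSup_le ?_ (by positivity)).trans_lt (half_lt_self hδ)⟩
    exact forall_mem_image.2 fun x hx => (hG G hGF x hx.1 hx.2).le
  set K := {x ∈ X | δ / 2 ≤ Metric.infDist x S}
  have hK : IsCompact K :=
    hXc.inter_right (isClosed_le continuous_const (Metric.continuous_infDist_pt S))
  rcases K.eq_empty_or_nonempty with hKe | hKne
  · refine ⟨1, one_pos, fun G _ x hx _ => not_le.1 fun hfar => ?_⟩
    exact hKe.subset ⟨hx, hfar⟩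
  obtain ⟨y₀, hy₀, hmin₀⟩ := hXc.exists_isMinOn hXne hF
  obtain ⟨y₁, hy₁, hmin₁⟩ := hK.exists_isMinOn hKne (hF.mono inter_subset_left)
  -- the gap `F y₁ - F y₀` separates `K` from the minimizers of `F`
  have hgap : F y₀ < F y₁ := by
    refine not_le.1 fun hle => ?_
    have hy₁S : y₁ ∈ S := ⟨hy₁.1, fun y hy => hle.trans (hmin₀ hy)⟩
    linarith [hy₁.2, Metric.infDist_zero_of_mem hy₁S]
  refine ⟨(F y₁ - F y₀) / 3, by linarith, fun G hGF x hx hxmin => not_le.1 fun hfar => ?_⟩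
  have hx₁ : F y₁ ≤ F x := hmin₁ ⟨hx, hfar⟩
  linarith [hxmin y₀ hy₀, (abs_le.1 (hGF x hx)).1, (abs_le.1 (hGF y₀ hy₀)).2]

end Argmin

lemma measurable_sSup_image_of_continuousOn {E S : Type*} [PseudoMetricSpace E]
    [TopologicalSpace.SeparableSpace E] [MeasurableSpace S] {h : E → S → ℝ} {A : Set E}
    (hmeas : ∀ y, Measurable (h y))
    (hcont : ∀ s, ContinuousOn (fun y => h y s) A)
    (hbdd : ∀ s, BddAbove ((fun y => h y s) '' A)) :
    Measurable fun s => sSup ((fun y => h y s) '' A) := by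
  obtain ⟨D, hDA, hDc, hAD⟩ :=
    (TopologicalSpace.IsSeparable.of_separableSpace A).exists_countable_dense_subset
  have hsup : ∀ s, sSup ((fun y => h y s) '' D) = sSup ((fun y => h y s) '' A) := by
    intro s
    rcases A.eq_empty_or_nonempty with rfl | hA
    · rw [subset_empty_iff.1 hDA]
    have hAD' : (fun y => h y s) '' A ⊆ closure ((fun y => h y s) '' D) := by
      rintro _ ⟨y, hy, rfl⟩
      exact ((hcont s y hy).mono hDA).mem_closure_image (hAD hy)
    have hD : D.Nonempty := closure_nonempty_iff.1 (hA.mono hAD)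
    exact ((isLUB_iff_of_subset_of_subset_closure (image_mono hDA) hAD').2
      (isLUB_csSup (hA.image _) (hbdd s))).csSup_eq (hD.image _)
  simp_rw [← hsup]
  exact Measurable.sSup hDc fun y _ => hmeas y

section LocalOscillation

variable {E S : Type*} [PseudoMetricSpace E] {ℓ : E → S → ℝ} {X : Set E} {Zbar : S → ℝ}
  {x : E} {r : ℝ}

def localOsc (ℓ : E → S → ℝ) (X : Set E) (x : E) (r : ℝ) (s : S) : ℝ :=
  sSup ((fun y => |ℓ y s - ℓ x s|) '' (Metric.ball x r ∩ X))

lemma localOsc_le_of_forall (hx : x ∈ X) (hr : 0 < r) {s : S} {c : ℝ}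
    (h : ∀ y ∈ Metric.ball x r ∩ X, |ℓ y s - ℓ x s| ≤ c) : localOsc ℓ X x r s ≤ c :=
  csSup_le (Set.Nonempty.image _ ⟨x, Metric.mem_ball_self hr, hx⟩) (forall_mem_image.2 h)

lemma bddAbove_localOsc (henv : ∀ x ∈ X, ∀ s, |ℓ x s| ≤ Zbar s) (hx : x ∈ X) (s : S) :
    BddAbove ((fun y => |ℓ y s - ℓ x s|) '' (Metric.ball x r ∩ X)) :=
  ⟨2 * Zbar s, forall_mem_image.2 fun y hy =>
    (abs_sub _ _).trans (by linarith [henv y hy.2 s, henv x hx s])⟩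

lemma abs_sub_le_localOsc (henv : ∀ x ∈ X, ∀ s, |ℓ x s| ≤ Zbar s) (hx : x ∈ X) {y : E}
    (hy : y ∈ Metric.ball x r ∩ X) (s : S) :
    |ℓ y s - ℓ x s| ≤ localOsc ℓ X x r s :=
  le_csSup (bddAbove_localOsc henv hx s) (mem_image_of_mem _ hy)

lemma localOsc_nonneg (henv : ∀ x ∈ X, ∀ s, |ℓ x s| ≤ Zbar s) (hx : x ∈ X) (hr : 0 < r) (s : S) :
    0 ≤ localOsc ℓ X x r s :=
  (abs_nonneg _).trans (abs_sub_le_localOsc henv hx ⟨Metric.mem_ball_self hr, hx⟩ s)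

lemma localOsc_le (henv : ∀ x ∈ X, ∀ s, |ℓ x s| ≤ Zbar s) (hx : x ∈ X) (hr : 0 < r) (s : S) :
    localOsc ℓ X x r s ≤ 2 * Zbar s :=
  localOsc_le_of_forall hx hr fun y hy =>
    (abs_sub _ _).trans (by linarith [henv y hy.2 s, henv x hx s])

lemma measurable_localOsc [TopologicalSpace.SeparableSpace E] [MeasurableSpace S]
    (henv : ∀ x ∈ X, ∀ s, |ℓ x s| ≤ Zbar s) (hx : x ∈ X) (hmeas : ∀ y, Measurable (ℓ y))
    (hcont : ∀ s, ContinuousOn (fun y => ℓ y s) X) : Measurable (localOsc ℓ X x r) :=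
  measurable_sSup_image_of_continuousOn (fun y => ((hmeas y).sub (hmeas x)).abs)
    (fun s => (((hcont s).mono inter_subset_right).sub continuousOn_const).abs)
    (bddAbove_localOsc henv hx)

lemma tendsto_localOsc (henv : ∀ x ∈ X, ∀ s, |ℓ x s| ≤ Zbar s) (hx : x ∈ X) (s : S)
    (hcont : ContinuousWithinAt (fun y => ℓ y s) X x) :
    Tendsto (fun k : ℕ => localOsc ℓ X x (1 / (k + 1)) s) atTop (nhds 0) := by
  rw [Metric.tendsto_atTop]
  intro θ hθ
  obtain ⟨δ, hδ, hball⟩ := Metric.continuousWithinAt_iff.1 hcont (θ / 2) (half_pos hθ)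
  obtain ⟨N, hN⟩ := exists_nat_one_div_lt hδ
  refine ⟨N, fun k hk => ?_⟩
  have hrk : (1 : ℝ) / (k + 1) < δ :=
    lt_of_le_of_lt (one_div_le_one_div_of_le (by positivity) (by exact_mod_cast by omega)) hN
  have hosc : localOsc ℓ X x (1 / (k + 1)) s ≤ θ / 2 :=
    localOsc_le_of_forall hx (by positivity) fun y hy => (hball hy.2 (hy.1.trans hrk)).le
  rw [Real.dist_eq, sub_zero, abs_of_nonneg (localOsc_nonneg henv hx (by positivity) s)]
  linarith

lemma exists_integral_localOsc_le [TopologicalSpace.SeparableSpace E] [MeasurableSpace S]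
    (P₀ : Measure S) (henv : ∀ x ∈ X, ∀ s, |ℓ x s| ≤ Zbar s) (hx : x ∈ X)
    (hmeas : ∀ y, Measurable (ℓ y)) (hcont : ∀ s, ContinuousOn (fun y => ℓ y s) X)
    (hZbar : Integrable Zbar P₀) {γ : ℝ} (hγ : 0 < γ) :
    ∃ r > 0, ∫ s, localOsc ℓ X x r s ∂P₀ ≤ γ := by
  have hlim : Tendsto (fun k : ℕ => ∫ s, localOsc ℓ X x (1 / (k + 1)) s ∂P₀) atTop
      (nhds (∫ _, (0 : ℝ) ∂P₀)) :=
    tendsto_integral_of_dominated_convergence (fun s => 2 * Zbar s)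
      (fun k => (measurable_localOsc henv hx hmeas hcont).aestronglyMeasurable)
      (hZbar.const_mul 2)
      (fun k => ae_of_all _ fun s => by
        rw [Real.norm_eq_abs, abs_of_nonneg (localOsc_nonneg henv hx (by positivity) s)]
        exact localOsc_le henv hx (by positivity) s)
      (ae_of_all _ fun s => tendsto_localOsc henv hx s (hcont s x hx))
  rw [integral_zero] at hlim
  obtain ⟨k, hk⟩ := (hlim.eventually (eventually_le_nhds hγ)).exists
  exact ⟨1 / (k + 1), by positivity, hk⟩

end LocalOscillation

lemma tendsto_natCast_mul_measure_le {S : Type*} [MeasurableSpace S] {P : Measure S}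
    [IsFiniteMeasure P] {Y : S → ℝ} (hY : Measurable Y) (hYi : Integrable Y P) {κ : ℝ}
    (hκ : 0 < κ) : Tendsto (fun n : ℕ => (n : ℝ≥0∞) * P {s | κ * n ≤ Y s}) atTop (nhds 0) := by
  set A : ℕ → Set S := fun n => {s | κ * n ≤ Y s}
  have hA : ∀ n, MeasurableSet (A n) := fun n => measurableSet_le measurable_const hY
  have hA0 : Tendsto (P ∘ A) atTop (nhds 0) := by
    have hanti : Antitone A := fun m n hmn s hs =>
      le_trans (by gcongr) (show κ * n ≤ Y s from hs)
    have hempty : ⋂ n, A n = ∅ := by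
      refine eq_empty_iff_forall_notMem.2 fun s hs => ?_
      obtain ⟨n, hn⟩ := exists_nat_gt (Y s / κ)
      have : κ * n ≤ Y s := mem_iInter.1 hs n
      rw [div_lt_iff₀ hκ] at hn
      linarith
    simpa [hempty] using tendsto_measure_iInter_atTop (fun n => (hA n).nullMeasurableSet)
      hanti ⟨0, measure_ne_top _ _⟩
  -- Markov on the tail: `κ n P(A n) ≤ ∫_{A n} Y`, which tends to `0` with `P (A n)`
  have hmarkov : ∀ n : ℕ, (n : ℝ≥0∞) * P (A n) ≤ ENNReal.ofReal (κ⁻¹ * ∫ s in A n, Y s ∂P) := by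
    intro n
    have h := setIntegral_ge_of_const_le_real (hA n) (measure_ne_top _ _) (fun s hs => hs)
      hYi.integrableOn
    rw [← ENNReal.ofReal_natCast, ← ofReal_measureReal (measure_ne_top _ _),
      ← ENNReal.ofReal_mul (Nat.cast_nonneg n)]
    refine ENNReal.ofReal_le_ofReal ?_
    rw [le_inv_mul_iff₀ hκ]
    linarith
  have hlim : Tendsto (fun n => ENNReal.ofReal (κ⁻¹ * ∫ s in A n, Y s ∂P)) atTop (nhds 0) := by
    simpa using ENNReal.tendsto_ofReal
      ((hYi.tendsto_setIntegral_nhds_zero hA0).const_mul κ⁻¹)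
  exact tendsto_of_tendsto_of_tendsto_of_le_of_le tendsto_const_nhds hlim (fun _ => zero_le)
    hmarkov

section Sampling

variable {S Ω : Type*} [MeasurableSpace S] [MeasurableSpace Ω] {P₀ : Measure S}
  {μ : Measure Ω} {Z : ℕ → Ω → S}

lemma ae_tendsto_sampleMean_comp (hZ : ∀ i, Measurable (Z i)) (hindep : iIndepFun Z μ)
    (hlaw : ∀ i, Measure.map (Z i) μ = P₀) {g : S → ℝ} (hg : Measurable g)
    (hgi : Integrable g P₀) :
    ∀ᵐ ω ∂μ, Tendsto (fun n => sampleMean fun i : Fin n => g (Z i ω)) atTop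
      (nhds (∫ s, g s ∂P₀)) := by
  have hint : Integrable (fun ω => g (Z 0 ω)) μ := by
    rw [← hlaw 0] at hgi
    exact hgi.comp_measurable (hZ 0)
  have hident : ∀ i, IdentDistrib (fun ω => g (Z i ω)) (fun ω => g (Z 0 ω)) μ μ := fun i =>
    IdentDistrib.comp ⟨(hZ i).aemeasurable, (hZ 0).aemeasurable, by rw [hlaw i, hlaw 0]⟩ hg
  have hmean : μ[fun ω => g (Z 0 ω)] = ∫ s, g s ∂P₀ := by
    rw [← hlaw 0, integral_map (hZ 0).aemeasurable hg.aestronglyMeasurable]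
  have := strong_law_ae_real (fun i ω => g (Z i ω)) hint
    (fun i j hij => (hindep.indepFun hij).comp hg hg) hident
  simpa only [sampleMean, Finset.sum_range, hmean] using this

lemma tendsto_measure_exists_le_mul (hZ : ∀ i, Measurable (Z i))
    (hlaw : ∀ i, Measure.map (Z i) μ = P₀) [IsFiniteMeasure P₀] {Y : S → ℝ} (hY : Measurable Y)
    (hYi : Integrable Y P₀) {κ : ℝ} (hκ : 0 < κ) :
    Tendsto (fun n : ℕ => μ {ω | ∃ i < n, κ * n ≤ Y (Z i ω)}) atTop (nhds 0) := by
  refine tendsto_of_tendsto_of_tendsto_of_le_of_le tendsto_const_nhds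
    (tendsto_natCast_mul_measure_le hY hYi hκ) (fun _ => zero_le) fun n => ?_
  calc μ {ω | ∃ i < n, κ * n ≤ Y (Z i ω)}
      = μ (⋃ i ∈ Finset.range n, Z i ⁻¹' {s | κ * n ≤ Y s}) := by
        congr 1
        ext ω
        simp
    _ ≤ ∑ i ∈ Finset.range n, μ (Z i ⁻¹' {s | κ * n ≤ Y s}) := measure_biUnion_finset_le _ _
    _ = ∑ _i ∈ Finset.range n, P₀ {s | κ * n ≤ Y s} := Finset.sum_congr rfl fun i _ => by
        rw [← Measure.map_apply (hZ i) (measurableSet_le measurable_const hY), hlaw]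
    _ = n * P₀ {s | κ * n ≤ Y s} := by rw [Finset.sum_const, Finset.card_range, nsmul_eq_mul]

end Sampling

lemma abs_sampleMean_sub_le {n : ℕ} {a b c : Fin n → ℝ} (h : ∀ i, |a i - b i| ≤ c i) :
    |sampleMean a - sampleMean b| ≤ sampleMean c := by
  rw [sampleMean, sampleMean, sampleMean, ← sub_div, ← Finset.sum_sub_distrib, abs_div,
    Nat.abs_cast]
  gcongr
  exact (Finset.abs_sum_le_sum_abs _ _).trans (Finset.sum_le_sum fun i _ => h i)

section UniformLLN

variable {S Ω : Type*} [MeasurableSpace S] [MeasurableSpace Ω] {P₀ : Measure S}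
  {μ : Measure Ω} {Z : ℕ → Ω → S}

lemma exists_uniform_sampleMean_bound {E : Type*} [PseudoMetricSpace E]
    [TopologicalSpace.SeparableSpace E] {X : Set E} {ℓ : E → S → ℝ} {Zbar : S → ℝ}
    (hZ : ∀ i, Measurable (Z i)) (hindep : iIndepFun Z μ) (hlaw : ∀ i, Measure.map (Z i) μ = P₀)
    (hXc : IsCompact X) (hmeas : ∀ x, Measurable (ℓ x))
    (hcont : ∀ s, ContinuousOn (fun x => ℓ x s) X) (henv : ∀ x ∈ X, ∀ s, |ℓ x s| ≤ Zbar s)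
    (hZbar : Integrable Zbar P₀) {γ : ℝ} (hγ : 0 < γ) :
    ∃ T : ℕ → Ω → ℝ, (∀ n, Measurable (T n)) ∧
      (∀ᵐ ω ∂μ, Tendsto (fun n => T n ω) atTop (nhds 0)) ∧
      ∀ n ω, ∀ x ∈ X,
        |sampleMean (fun i : Fin n => ℓ x (Z i ω)) - ∫ s, ℓ x s ∂P₀| ≤ T n ω + 2 * γ := by
  choose! r hr hosc using fun x (hx : x ∈ X) =>
    exists_integral_localOsc_le P₀ henv hx hmeas hcont hZbar hγ
  obtain ⟨t, htX, hcover⟩ :=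
    hXc.elim_nhds_subcover (fun x => Metric.ball x (r x)) fun x hx =>
      Metric.ball_mem_nhds x (hr x hx)
  let dev : (S → ℝ) → ℕ → Ω → ℝ := fun g n ω =>
    |sampleMean (fun i : Fin n => g (Z i ω)) - ∫ s, g s ∂P₀|
  have hdev_meas : ∀ g, Measurable g → ∀ n, Measurable (dev g n) := fun g hg n => by
    simp only [dev, sampleMean]
    fun_prop
  have hdev_lim : ∀ g, Measurable g → Integrable g P₀ →
      ∀ᵐ ω ∂μ, Tendsto (fun n => dev g n ω) atTop (nhds 0) := fun g hg hgi =>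
    (ae_tendsto_sampleMean_comp hZ hindep hlaw hg hgi).mono fun ω h => by
      simpa using (h.sub_const (∫ s, g s ∂P₀)).abs
  have hint : ∀ x ∈ X, Integrable (ℓ x) P₀ := fun x hx =>
    hZbar.mono' (hmeas x).aestronglyMeasurable (ae_of_all _ (henv x hx))
  have hosc_meas : ∀ j ∈ t, Measurable (localOsc ℓ X j (r j)) := fun j hj =>
    measurable_localOsc henv (htX j hj) hmeas hcont
  have hosc_int : ∀ j ∈ t, Integrable (localOsc ℓ X j (r j)) P₀ := fun j hj =>
    (hZbar.const_mul 2).mono' (hosc_meas j hj).aestronglyMeasurable (ae_of_all _ fun s => by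
      rw [Real.norm_eq_abs, abs_of_nonneg (localOsc_nonneg henv (htX j hj) (hr j (htX j hj)) s)]
      exact localOsc_le henv (htX j hj) (hr j (htX j hj)) s)
  refine ⟨fun n ω => ∑ j ∈ t, (dev (ℓ j) n ω + dev (localOsc ℓ X j (r j)) n ω), fun n =>
    Finset.measurable_sum _ fun j hj =>
      (hdev_meas _ (hmeas j) n).add (hdev_meas _ (hosc_meas j hj) n), ?_, ?_⟩
  · have hall : ∀ᵐ ω ∂μ, ∀ j ∈ t,
        Tendsto (fun n => dev (ℓ j) n ω + dev (localOsc ℓ X j (r j)) n ω) atTop (nhds 0) := by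
      refine (ae_ball_iff t.countable_toSet).2 fun j hj => ?_
      filter_upwards [hdev_lim _ (hmeas j) (hint j (htX j hj)),
        hdev_lim _ (hosc_meas j hj) (hosc_int j hj)] with ω h₁ h₂
      simpa using h₁.add h₂
    filter_upwards [hall] with ω hω
    simpa using tendsto_finsetSum t hω
  · intro n ω x hx
    obtain ⟨j, hjt, hxj⟩ := mem_iUnion₂.1 (hcover hx)
    have hjX := htX j hjt
    have hsample := abs_sampleMean_sub_le (a := fun i : Fin n => ℓ x (Z i ω))
      (b := fun i => ℓ j (Z i ω)) fun i => abs_sub_le_localOsc henv hjX ⟨hxj, hx⟩ (Z i ω)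
    have hmean : |∫ s, ℓ x s ∂P₀ - ∫ s, ℓ j s ∂P₀| ≤ ∫ s, localOsc ℓ X j (r j) s ∂P₀ := by
      rw [← integral_sub (hint x hx) (hint j hjX)]
      exact (abs_integral_le_integral_abs).trans (integral_mono ((hint x hx).sub (hint j hjX)).abs
        (hosc_int j hjt) fun s => abs_sub_le_localOsc henv hjX ⟨hxj, hx⟩ s)
    have hterm : dev (ℓ j) n ω + dev (localOsc ℓ X j (r j)) n ω
        ≤ ∑ k ∈ t, (dev (ℓ k) n ω + dev (localOsc ℓ X k (r k)) n ω) :=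
      Finset.single_le_sum (f := fun k => dev (ℓ k) n ω + dev (localOsc ℓ X k (r k)) n ω)
        (fun k _ => by positivity) hjt
    have hosc_dev := le_abs_self
      (sampleMean (fun i : Fin n => localOsc ℓ X j (r j) (Z i ω)) - ∫ s, localOsc ℓ X j (r j) s ∂P₀)
    have htri := abs_sub_le (sampleMean fun i : Fin n => ℓ x (Z i ω))
      (sampleMean fun i : Fin n => ℓ j (Z i ω)) (∫ s, ℓ x s ∂P₀)
    have htri' := abs_sub_le (sampleMean fun i : Fin n => ℓ j (Z i ω)) (∫ s, ℓ j s ∂P₀)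
      (∫ s, ℓ x s ∂P₀)
    rw [abs_sub_comm (∫ s, ℓ j s ∂P₀)] at htri'
    linarith [hosc j hjX]

end UniformLLN

lemma integrable_of_integrable_rpow {S : Type*} [MeasurableSpace S] {P : Measure S}
    [IsFiniteMeasure P] {g : S → ℝ} (hg : Measurable g) (hg0 : ∀ s, 0 ≤ g s) {p : ℝ}
    (hp : 1 ≤ p) (h : Integrable (fun s => g s ^ p) P) : Integrable g P := by
  have hLp : MemLp g (ENNReal.ofReal p) P := by
    refine (integrable_norm_rpow_iff hg.aestronglyMeasurable (by simp; linarith) (by simp)).1 ?_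
    simpa [Real.norm_eq_abs, abs_of_nonneg (hg0 _), ENNReal.toReal_ofReal (by linarith : 0 ≤ p)]
      using h
  exact memLp_one_iff_integrable.1 (hLp.mono_exponent (by simpa using hp))

section RobustConsistency

variable {S Ω : Type*} [MeasurableSpace S] [MeasurableSpace Ω] {P₀ : Measure S}
  [IsProbabilityMeasure P₀] {μ : Measure Ω} [IsProbabilityMeasure μ] {Z : ℕ → Ω → S}

lemma tendsto_measure_not_forall_abs_robustAverage_sub_le {E : Type*} [PseudoMetricSpace E]
    [TopologicalSpace.SeparableSpace E] {X : Set E} {ℓ : E → S → ℝ} {Zbar : S → ℝ}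
    {f : ℝ → EReal} {ρ : ℝ} (hZ : ∀ i, Measurable (Z i)) (hindep : iIndepFun Z μ)
    (hlaw : ∀ i, Measure.map (Z i) μ = P₀) (hf : IsDivergenceFn f) (hρ : 0 < ρ)
    (hXc : IsCompact X) (hmeas : ∀ x, Measurable (ℓ x))
    (hcont : ∀ s, ContinuousOn (fun x => ℓ x s) X) (henv : ∀ x ∈ X, ∀ s, |ℓ x s| ≤ Zbar s)
    (hZbarMeas : Measurable Zbar) (hZbar : Integrable Zbar P₀) {c : ℝ} (hc : 0 < c) :
    Tendsto (fun n : ℕ => μ {ω | ¬ ∀ x ∈ X,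
        |robustAverage f ρ (fun i : Fin n => ℓ x (Z i ω)) - ∫ s, ℓ x s ∂P₀| ≤ c})
      atTop (nhds 0) := by
  obtain ⟨η₀, hη₀, hhinge⟩ := hf.exists_hinge_le
  set m := ∫ s, Zbar s ∂P₀
  set η := min η₀ (c / (4 * (|m| + 1)))
  have hη : 0 < η := lt_min hη₀ (by positivity)
  have hηm : η * m ≤ c / 4 :=
    calc η * m ≤ η * (|m| + 1) := mul_le_mul_of_nonneg_left (by linarith [le_abs_self m]) hη.le
      _ ≤ c / (4 * (|m| + 1)) * (|m| + 1) :=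
          mul_le_mul_of_nonneg_right (min_le_right _ _) (by positivity)
      _ = c / 4 := by field_simp
  obtain ⟨T, hTm, hTae, hT⟩ := exists_uniform_sampleMean_bound hZ hindep hlaw hXc hmeas hcont
    henv hZbar (γ := c / 8) (by positivity)
  set U : ℕ → Ω → ℝ := fun n ω => T n ω + η * |sampleMean (fun i : Fin n => Zbar (Z i ω)) - m|
  have hU : TendstoInMeasure μ U atTop fun _ => 0 := by
    refine tendstoInMeasure_of_tendsto_ae (fun n => ?_) ?_
    · refine ((hTm n).add (Measurable.const_mul ?_ _)).aestronglyMeasurable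
      simp only [sampleMean]
      fun_prop
    · filter_upwards [hTae, ae_tendsto_sampleMean_comp hZ hindep hlaw hZbarMeas hZbar]
        with ω hTω hmean
      simpa [m] using hTω.add (((hmean.sub_const m).abs).const_mul η)
  set κ := c * η / (8 * ρ)
  have hsub : ∀ n ≠ 0, {ω | ¬ ∀ x ∈ X,
      |robustAverage f ρ (fun i : Fin n => ℓ x (Z i ω)) - ∫ s, ℓ x s ∂P₀| ≤ c} ⊆
      {ω | c / 4 ≤ dist (U n ω) 0} ∪ {ω | ∃ i < n, κ * n ≤ Zbar (Z i ω)} := by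
    intro n hn ω hω
    by_contra hgood
    simp only [mem_union, mem_ofPred_eq, not_or, not_le, not_exists, not_and, Real.dist_eq,
      sub_zero] at hgood
    refine hω fun x hx => ?_
    have hn' : (0 : ℝ) < n := by exact_mod_cast Nat.pos_of_ne_zero hn
    have hrob := abs_robustAverage_sub_sampleMean_le hf.apply_one hρ.le hn hη
      (hhinge η hη (min_le_left _ _)) (z := fun i : Fin n => ℓ x (Z i ω))
      (w := fun i => Zbar (Z i ω)) (W := κ * n) (fun i => henv x hx _)
      (fun i => (hgood.2 i i.2).le) (by positivity)
    have hκ : 2 * ρ / η * (κ * n) / n = c / 4 := by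
      simp only [κ]
      field_simp
      ring
    have hdev := mul_le_mul_of_nonneg_left
      (le_abs_self (sampleMean (fun i : Fin n => Zbar (Z i ω)) - m)) hη.le
    have hUsmall := (le_abs_self (U n ω)).trans_lt hgood.1
    linarith [abs_sub_le (robustAverage f ρ (fun i : Fin n => ℓ x (Z i ω)))
      (sampleMean fun i : Fin n => ℓ x (Z i ω)) (∫ s, ℓ x s ∂P₀), hT n ω x hx]
  have hlim := (tendstoInMeasure_iff_dist.1 hU (c / 4) (by positivity)).add
    (tendsto_measure_exists_le_mul hZ hlaw hZbarMeas hZbar (show 0 < κ by positivity))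
  rw [add_zero] at hlim
  refine tendsto_of_tendsto_of_tendsto_of_le_of_le' tendsto_const_nhds hlim
    (Eventually.of_forall fun _ => zero_le)
    ((eventually_ne_atTop 0).mono fun n hn => (measure_mono (hsub n hn)).trans
      (measure_union_le _ _))

end RobustConsistency

theorem stmt13 {S : Type*} [MeasurableSpace S] (P₀ : Measure S) [IsProbabilityMeasure P₀]
    {Ω : Type*} [MeasurableSpace Ω] (μ : Measure Ω) [IsProbabilityMeasure μ]
    (f : ℝ → EReal) (hf : IsDivergenceFn f) (ρ : ℝ) (hρ : 0 < ρ)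
    (d : ℕ) (X : Set (Fin d → ℝ)) (hXne : X.Nonempty) (hXc : IsCompact X)
    (ℓ : (Fin d → ℝ) → S → ℝ)
    (hmeas : Measurable fun q : (Fin d → ℝ) × S => ℓ q.1 q.2)
    (hcont : ∀ s : S, ContinuousOn (fun x => ℓ x s) X)
    (Zbar : S → ℝ) (hZbarMeas : Measurable Zbar) (hZbarNN : ∀ s, 0 ≤ Zbar s)
    (henv : ∀ x ∈ X, ∀ s : S, |ℓ x s| ≤ Zbar s)
    (ε : ℝ) (hε : 0 < ε) (hmom : Integrable (fun s => Zbar s ^ (1 + ε)) P₀)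
    (Z : ℕ → Ω → S) (hZ : ∀ i, Measurable (Z i))
    (hindep : iIndepFun Z μ)
    (hlaw : ∀ i, Measure.map (Z i) μ = P₀) :
    (∀ δ : ℝ, 0 < δ →
      Tendsto (fun n : ℕ => μ {ω |
          δ ≤ |sInf ((fun x : Fin d → ℝ =>
                  sSup ((fun p : Fin n → ℝ => ∑ i : Fin n, p i * ℓ x (Z i.1 ω))
                    '' simplexBall f n ρ)) '' X)
                - sInf ((fun x : Fin d → ℝ => ∫ s, ℓ x s ∂P₀) '' X)|})
        atTop (nhds 0)) ∧
    (∀ δ : ℝ, 0 < δ →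
      Tendsto (fun n : ℕ => μ {ω |
          δ ≤ sSup ((fun x : Fin d → ℝ =>
                Metric.infDist x {y ∈ X | ∀ y' ∈ X, (∫ s, ℓ y s ∂P₀) ≤ ∫ s, ℓ y' s ∂P₀}) ''
              {x ∈ X | ∀ x' ∈ X,
                sSup ((fun p : Fin n → ℝ => ∑ i : Fin n, p i * ℓ x (Z i.1 ω))
                  '' simplexBall f n ρ) ≤
                sSup ((fun p : Fin n → ℝ => ∑ i : Fin n, p i * ℓ x' (Z i.1 ω))
                  '' simplexBall f n ρ)})})
        atTop (nhds 0)) := by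
  have hmeasx : ∀ x, Measurable (ℓ x) := fun x => hmeas.comp (measurable_const.prodMk measurable_id)
  have hZbar : Integrable Zbar P₀ :=
    integrable_of_integrable_rpow hZbarMeas hZbarNN (by linarith) hmom
  have hF : ContinuousOn (fun x => ∫ s, ℓ x s ∂P₀) X :=
    continuousOn_of_dominated (fun x _ => (hmeasx x).aestronglyMeasurable)
      (fun x hx => ae_of_all _ (henv x hx)) hZbar (ae_of_all _ hcont)
  have hunif := fun c (hc : 0 < c) => tendsto_measure_not_forall_abs_robustAverage_sub_le
    hZ hindep hlaw hf hρ hXc hmeasx hcont henv hZbarMeas hZbar hc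
  refine ⟨fun δ hδ => ?_, fun δ hδ => ?_⟩
  · obtain ⟨y₀, hy₀, hmin⟩ := hXc.exists_isMinOn hXne hF
    refine tendsto_of_tendsto_of_tendsto_of_le_of_le tendsto_const_nhds
      (hunif (δ / 2) (half_pos hδ)) (fun _ => zero_le) fun n => measure_mono fun ω hω hclose => ?_
    exact (half_lt_self hδ).not_ge (hω.trans (abs_sInf_image_sub_le hy₀ hmin hclose))
  · obtain ⟨c, hc, hstab⟩ := exists_sSup_infDist_argmin_lt hXc hXne hF hδ
    exact tendsto_of_tendsto_of_tendsto_of_le_of_le tendsto_const_nhds (hunif c hc)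
      (fun _ => zero_le) fun n => measure_mono fun ω hω hclose => (hstab _ hclose).not_ge hω
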